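/- arXiv:1706.01806 — 2 statements merged into one kernel-verified Lean document; each statement's English description precedes it below -/
import Mathlib

section
/- For nonzero polynomials p, q in the free associative algebra K⟨X⟩, the Hankel rank of the product satisfies rank(pq) = rank(p) + rank(q) − 1, where rank denotes the rank of the (possibly infinite) Hankel matrix. -/
/-!
The row of `H(p)` indexed by `w` is the left quotient `w⁻¹p : v ↦ p(wv)`, so `rank p` is the
dimension of `V(p) = span {w⁻¹p}`. Put `N(q) = span {t⁻¹q | t ≠ 1}`; its elements have degree
`< deg q`, hence `V(q) = N(q) ⊕ K q`. The Leibniz rule `x⁻¹(pq) = (x⁻¹p) q + p(1) x⁻¹q` gives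
`w⁻¹(pq) ≡ (w⁻¹p) q (mod N(q))`, so `V(pq) + N(q) = V(p) q ⊕ N(q)`, the sum being direct because a
nonzero multiple of `q` has degree `≥ deg q`. Finally `N(q) ⊆ V(pq)`: for a word `w` of maximal
length in `p`, `w⁻¹(pq) ≡ c q (mod N(q))` with `c ≠ 0`, and a downward induction on `|t|` puts every
`t⁻¹q` in the span of the `t⁻¹w⁻¹(pq)`. Thus `rank (pq) = rank p + (rank q - 1)`.
-/

open Module Submodule FreeMonoid MonoidAlgebra

/-- The Hankel rank of `p ∈ K⟨X⟩`: the dimension of the row space of the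
Hankel matrix `(w₁, w₂) ↦ (coefficient of w₁w₂ in p)`. -/
noncomputable def hankelRank {K X : Type*} [Field K]
    (p : MonoidAlgebra K (FreeMonoid X)) : ℕ :=
  Module.finrank K (Submodule.span K
    (Set.range (fun w₁ : FreeMonoid X => (fun w₂ : FreeMonoid X => p.coeff (w₁ * w₂)))))

namespace Submodule

lemma finrank_sup_of_disjoint {K V : Type*} [DivisionRing K] [AddCommGroup V] [Module K V]
    {s t : Submodule K V} [FiniteDimensional K s] [FiniteDimensional K t] (h : Disjoint s t) :
    finrank K ↥(s ⊔ t) = finrank K s + finrank K t := by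
  rw [← finrank_sup_add_finrank_inf_eq, h.eq_bot, finrank_bot, add_zero]

variable {R M ι : Type*} [Ring R] [AddCommGroup M] [Module R M]

lemma span_range_le_sup_of_sub_mem {a b : ι → M} {N : Submodule R M} (h : ∀ i, a i - b i ∈ N) :
    span R (Set.range a) ≤ span R (Set.range b) ⊔ N :=
  span_le.2 <| Set.range_subset_iff.2 fun i ↦ by
    rw [SetLike.mem_coe, ← sub_add_cancel (a i) (b i)]
    exact add_mem (mem_sup_right (h i)) (mem_sup_left (subset_span ⟨i, rfl⟩))

lemma span_range_sup_eq_of_sub_mem {a b : ι → M} {N : Submodule R M} (h : ∀ i, a i - b i ∈ N) :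
    span R (Set.range a) ⊔ N = span R (Set.range b) ⊔ N :=
  le_antisymm (sup_le (span_range_le_sup_of_sub_mem h) le_sup_right)
    (sup_le (span_range_le_sup_of_sub_mem fun i ↦ by simpa using neg_mem (h i)) le_sup_right)

end Submodule

namespace Hankel

variable {K X : Type*} [Field K]

local notation "K⟨X⟩" => MonoidAlgebra K (FreeMonoid X)

noncomputable def leftQuot (w : FreeMonoid X) : K⟨X⟩ →ₗ[K] K⟨X⟩ :=
  (coeffLinearEquiv K).symm.toLinearMap ∘ₗ
    Finsupp.lcomapDomain (w * ·) (fun _ _ ↦ mul_left_cancel) ∘ₗ (coeffLinearEquiv K).toLinearMap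

@[simp]
lemma coeff_leftQuot (w v : FreeMonoid X) (p : K⟨X⟩) : (leftQuot w p).coeff v = p.coeff (w * v) :=
  rfl

@[simp]
lemma leftQuot_one_apply (p : K⟨X⟩) : leftQuot 1 p = p := by
  ext; simp

lemma leftQuot_leftQuot (w t : FreeMonoid X) (p : K⟨X⟩) :
    leftQuot t (leftQuot w p) = leftQuot (w * t) p := by
  ext; simp [mul_assoc]

lemma leftQuot_single_mul (w : FreeMonoid X) (p : K⟨X⟩) : leftQuot w (single w 1 * p) = p := by
  ext; simp

lemma leftQuot_of_single_of_mul {x y : X} (h : y ≠ x) (p : K⟨X⟩) :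
    leftQuot (of x) (single (of y) 1 * p) = 0 := by
  ext v
  refine coeff_single_mul_of_forall_mul_ne _ _ fun u huv ↦ h ?_
  simpa using congrArg (·.toList.head?) huv

noncomputable def degree (p : K⟨X⟩) : ℕ := p.coeff.support.sup length

lemma length_le_degree {p : K⟨X⟩} {w : FreeMonoid X} (hw : p.coeff w ≠ 0) : w.length ≤ degree p :=
  Finset.le_sup (Finsupp.mem_support_iff.2 hw)

lemma coeff_eq_zero_of_degree_lt {p : K⟨X⟩} {w : FreeMonoid X} (hw : degree p < w.length) :
    p.coeff w = 0 := by
  by_contra h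
  exact (length_le_degree h).not_gt hw

lemma exists_coeff_ne_zero_length_eq_degree {p : K⟨X⟩} (hp : p ≠ 0) :
    ∃ w, p.coeff w ≠ 0 ∧ w.length = degree p := by
  obtain ⟨w, hw, hlen⟩ := Finset.exists_mem_eq_sup _
    (Finsupp.support_nonempty_iff.2 (coeff_eq_zero.not.2 hp)) length
  exact ⟨w, Finsupp.mem_support_iff.1 hw, hlen.symm⟩

lemma leftQuot_eq_zero_of_degree_lt {p : K⟨X⟩} {w : FreeMonoid X} (hw : degree p < w.length) :
    leftQuot w p = 0 := by
  ext v
  simpa using coeff_eq_zero_of_degree_lt (by simp; omega)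

lemma leftQuot_of_length_eq_degree {p : K⟨X⟩} {w : FreeMonoid X} (hw : w.length = degree p) :
    leftQuot w p = p.coeff w • 1 := by
  ext v
  rcases eq_or_ne v 1 with rfl | hv
  · simp [one_def]
  · rw [coeff_leftQuot, coeff_eq_zero_of_degree_lt]
    · simp [one_def, Finsupp.single_eq_of_ne' (Ne.symm hv)]
    · simpa [← hw, Nat.pos_iff_ne_zero] using hv

lemma leftQuot_of_mul (x : X) (p q : K⟨X⟩) :
    leftQuot (of x) (p * q) = leftQuot (of x) p * q + p.coeff 1 • leftQuot (of x) q := by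
  induction p using induction_linear with
  | zero => simp
  | add p p' hp hp' =>
    simp only [add_mul, map_add, hp, hp', coeff_add, Finsupp.add_apply, add_smul]
    abel
  | single m a =>
    cases m with
    | one =>
      have hq : single 1 a * q = a • q := by ext; simp [coeff_single_one_mul]
      have h0 : leftQuot (of x) (single 1 a : K⟨X⟩) = 0 := by
        ext v; simp [coeff_single]
      simp [hq, h0]
    | of_mul y u =>
      have hsplit : (single (of y * u) a : K⟨X⟩) = single (of y) 1 * single u a := by
        rw [single_mul_single, one_mul]
      have hc : (single (of y * u) a : K⟨X⟩).coeff 1 = 0 := by simp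
      rw [hc, hsplit, zero_smul, add_zero, mul_assoc]
      rcases eq_or_ne y x with rfl | hyx
      · simp only [leftQuot_single_mul]
      · simp only [leftQuot_of_single_of_mul hyx, zero_mul]

noncomputable def degreeLT (n : ℕ) : Submodule K K⟨X⟩ := supported K K {w | w.length < n}

lemma notMem_degreeLT_degree {p : K⟨X⟩} (hp : p ≠ 0) : p ∉ degreeLT (degree p) := by
  obtain ⟨w, hw, hlen⟩ := exists_coeff_ne_zero_length_eq_degree hp
  exact fun h ↦ (h (Finsupp.mem_support_iff.2 hw)).ne hlen

lemma leftQuot_mem_degreeLT {w : FreeMonoid X} (hw : w ≠ 1) (p : K⟨X⟩) :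
    leftQuot w p ∈ degreeLT (degree p) := by
  rw [degreeLT, mem_supported']
  intro v hv
  have hw0 : w.length ≠ 0 := by simpa using hw
  rw [coeff_leftQuot]
  exact coeff_eq_zero_of_degree_lt (by simp at hv ⊢; omega)

lemma mul_notMem_degreeLT {p q : K⟨X⟩} (hp : p ≠ 0) (hq : q ≠ 0) :
    p * q ∉ degreeLT (degree q) := by
  obtain ⟨u, hu, hul⟩ := exists_coeff_ne_zero_length_eq_degree hp
  obtain ⟨s, hs, hsl⟩ := exists_coeff_ne_zero_length_eq_degree hq
  have hunique : UniqueMul p.coeff.support q.coeff.support u s := by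
    intro a b ha hb hab
    have ha' := length_le_degree (Finsupp.mem_support_iff.1 ha)
    have hb' := length_le_degree (Finsupp.mem_support_iff.1 hb)
    have hlen : a.length + b.length = u.length + s.length := by simpa using congrArg length hab
    exact List.append_inj hab (show a.length = u.length by omega)
  intro h
  have hne : (p * q).coeff (u * s) ≠ 0 := by
    rw [coeff_mul_mul_of_uniqueMul hunique]; exact mul_ne_zero hu hs
  have := h (Finsupp.mem_support_iff.2 hne)
  simp at this
  omega

noncomputable def quotSpan (p : K⟨X⟩) : Submodule K K⟨X⟩ := span K (Set.range fun w ↦ leftQuot w p)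

noncomputable def properQuotSpan (p : K⟨X⟩) : Submodule K K⟨X⟩ :=
  span K ((fun w ↦ leftQuot w p) '' {w | w ≠ 1})

lemma leftQuot_mem_quotSpan (w : FreeMonoid X) (p : K⟨X⟩) : leftQuot w p ∈ quotSpan p :=
  subset_span ⟨w, rfl⟩

lemma leftQuot_mem_properQuotSpan {w : FreeMonoid X} (hw : w ≠ 1) (p : K⟨X⟩) :
    leftQuot w p ∈ properQuotSpan p :=
  subset_span ⟨w, hw, rfl⟩

lemma properQuotSpan_le_quotSpan (p : K⟨X⟩) : properQuotSpan p ≤ quotSpan p :=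
  span_mono (Set.image_subset_range _ _)

lemma properQuotSpan_le_degreeLT (p : K⟨X⟩) : properQuotSpan p ≤ degreeLT (degree p) :=
  span_le.2 <| Set.image_subset_iff.2 fun _ hw ↦ leftQuot_mem_degreeLT hw p

lemma quotSpan_eq_properQuotSpan_sup (p : K⟨X⟩) : quotSpan p = properQuotSpan p ⊔ K ∙ p := by
  refine le_antisymm (span_le.2 <| Set.range_subset_iff.2 fun w ↦ ?_) <|
    sup_le (properQuotSpan_le_quotSpan p) <| (span_singleton_le_iff_mem _ _).2 <| by
      simpa using leftQuot_mem_quotSpan 1 p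
  rcases eq_or_ne w 1 with rfl | hw
  · simpa using mem_sup_right (mem_span_singleton_self p)
  · exact mem_sup_left (leftQuot_mem_properQuotSpan hw p)

lemma quotSpan_leftQuot_le (w : FreeMonoid X) (p : K⟨X⟩) : quotSpan (leftQuot w p) ≤ quotSpan p :=
  span_le.2 <| Set.range_subset_iff.2 fun t ↦ by
    rw [SetLike.mem_coe, leftQuot_leftQuot]; exact leftQuot_mem_quotSpan _ p

lemma finite_setOf_mul_eq (u : FreeMonoid X) : {w | ∃ v, w * v = u}.Finite :=
  ((List.finite_toSet u.toList.inits).preimage toList.injective.injOn).subset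
    fun w ⟨v, hv⟩ ↦ (List.mem_inits _ _).2 ⟨v.toList, by rw [← hv]; rfl⟩

lemma finite_range_leftQuot (p : K⟨X⟩) : (Set.range fun w ↦ leftQuot w p).Finite := by
  have hprefix : {w | ∃ v, w * v ∈ p.coeff.support}.Finite :=
    (p.coeff.support.finite_toSet.biUnion fun u _ ↦ finite_setOf_mul_eq u).subset
      fun w ⟨v, hv⟩ ↦ Set.mem_biUnion hv ⟨v, rfl⟩
  refine ((hprefix.image fun w ↦ leftQuot w p).insert 0).subset <| Set.range_subset_iff.2 fun w ↦ ?_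
  by_cases hw : ∃ v, w * v ∈ p.coeff.support
  · exact Or.inr ⟨w, hw, rfl⟩
  · left
    ext v
    simpa using fun h ↦ hw ⟨v, h⟩

instance (p : K⟨X⟩) : FiniteDimensional K (quotSpan p) :=
  FiniteDimensional.span_of_finite K (finite_range_leftQuot p)

instance (p : K⟨X⟩) : FiniteDimensional K (properQuotSpan p) :=
  Submodule.finiteDimensional_of_le (properQuotSpan_le_quotSpan p)

lemma leftQuot_mul_sub_mem_properQuotSpan (w : FreeMonoid X) (p q : K⟨X⟩) :
    leftQuot w (p * q) - leftQuot w p * q ∈ properQuotSpan q := by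
  induction w using FreeMonoid.inductionOn' generalizing p with
  | one => simp
  | of_mul x w ih =>
    have hxw : leftQuot (of x * w) q ∈ properQuotSpan q :=
      leftQuot_mem_properQuotSpan (FreeMonoid.length_eq_zero.not.1 (by simp)) q
    have key : leftQuot (of x * w) (p * q) - leftQuot (of x * w) p * q =
        (leftQuot w (leftQuot (of x) p * q) - leftQuot w (leftQuot (of x) p) * q) +
          p.coeff 1 • leftQuot (of x * w) q := by
      simp only [← leftQuot_leftQuot (of x) w, leftQuot_of_mul, map_add, map_smul]
      abel
    rw [key]
    exact add_mem (ih _) (smul_mem _ _ hxw)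

lemma properQuotSpan_le_of_sub_smul_mem {q r : K⟨X⟩} {c : K} (hc : c ≠ 0)
    (h : r - c • q ∈ properQuotSpan q) : properQuotSpan q ≤ properQuotSpan r := by
  suffices ∀ m (t : FreeMonoid X), t ≠ 1 → degree q < t.length + m →
      leftQuot t q ∈ properQuotSpan r from
    span_le.2 <| Set.image_subset_iff.2 fun t ht ↦ this (degree q + 1) t ht (by omega)
  intro m
  induction m with
  | zero =>
    intro t _ ht
    rw [leftQuot_eq_zero_of_degree_lt ht]
    exact zero_mem _
  | succ m ih =>
    intro t ht hlen
    have hsplit : leftQuot t q = c⁻¹ • (leftQuot t r - leftQuot t (r - c • q)) := by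
      rw [map_sub, map_smul, sub_sub_cancel, inv_smul_smul₀ hc]
    have hmap : (properQuotSpan q).map (leftQuot t) ≤ properQuotSpan r := by
      refine (map_span_le _ _ _).2 ?_
      rintro _ ⟨s, hs, rfl⟩
      rw [leftQuot_leftQuot]
      have hs0 : s.length ≠ 0 := by simpa using hs
      exact ih (s * t) (FreeMonoid.length_eq_zero.not.1 (by rw [length_mul]; omega))
        (by rw [length_mul]; omega)
    rw [hsplit]
    exact smul_mem _ _ (sub_mem (leftQuot_mem_properQuotSpan ht r) (hmap (mem_map_of_mem h)))

lemma properQuotSpan_le_quotSpan_mul {p : K⟨X⟩} (hp : p ≠ 0) (q : K⟨X⟩) :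
    properQuotSpan q ≤ quotSpan (p * q) := by
  obtain ⟨w, hw, hlen⟩ := exists_coeff_ne_zero_length_eq_degree hp
  have h := leftQuot_mul_sub_mem_properQuotSpan w p q
  rw [leftQuot_of_length_eq_degree hlen, smul_mul_assoc, one_mul] at h
  calc properQuotSpan q ≤ properQuotSpan (leftQuot w (p * q)) :=
        properQuotSpan_le_of_sub_smul_mem hw h
    _ ≤ quotSpan (leftQuot w (p * q)) := properQuotSpan_le_quotSpan _
    _ ≤ quotSpan (p * q) := quotSpan_leftQuot_le w (p * q)

lemma quotSpan_mul_eq {p : K⟨X⟩} (hp : p ≠ 0) (q : K⟨X⟩) :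
    quotSpan (p * q) = (quotSpan p).map (LinearMap.mulRight K q) ⊔ properQuotSpan q := by
  have hmap : (quotSpan p).map (LinearMap.mulRight K q) =
      span K (Set.range fun w ↦ leftQuot w p * q) := by
    rw [quotSpan, map_span, ← Set.range_comp]; rfl
  rw [hmap, ← sup_eq_left.2 (properQuotSpan_le_quotSpan_mul hp q), quotSpan]
  exact span_range_sup_eq_of_sub_mem (fun w ↦ leftQuot_mul_sub_mem_properQuotSpan w p q)

lemma disjoint_range_mulRight_properQuotSpan {q : K⟨X⟩} (hq : q ≠ 0) :
    Disjoint (LinearMap.range (LinearMap.mulRight K q)) (properQuotSpan q) := by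
  refine disjoint_def.2 ?_
  rintro _ ⟨v, rfl⟩ hv
  by_contra h0
  exact mul_notMem_degreeLT (left_ne_zero_of_mul h0) hq (properQuotSpan_le_degreeLT q hv)

lemma finrank_quotSpan_mul {p q : K⟨X⟩} (hp : p ≠ 0) (hq : q ≠ 0) :
    finrank K (quotSpan (p * q)) = finrank K (quotSpan p) + finrank K (properQuotSpan q) := by
  have hinj : Function.Injective (LinearMap.mulRight K q) := mul_left_injective₀ hq
  have hdisj := (disjoint_range_mulRight_properQuotSpan hq).mono_left
    (LinearMap.map_le_range (f := LinearMap.mulRight K q) (p := quotSpan p))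
  rw [quotSpan_mul_eq hp, finrank_sup_of_disjoint hdisj,
    (LinearEquiv.finrank_eq (equivMapOfInjective _ hinj (quotSpan p))).symm]

lemma finrank_quotSpan_eq_succ {p : K⟨X⟩} (hp : p ≠ 0) :
    finrank K (quotSpan p) = finrank K (properQuotSpan p) + 1 := by
  rw [quotSpan_eq_properQuotSpan_sup, finrank_sup_of_disjoint, finrank_span_singleton hp]
  exact (disjoint_span_singleton' hp).2 fun h ↦
    notMem_degreeLT_degree hp (properQuotSpan_le_degreeLT p h)

lemma hankelRank_eq_finrank_quotSpan (p : K⟨X⟩) : hankelRank p = finrank K (quotSpan p) := by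
  let coeffFun : K⟨X⟩ →ₗ[K] FreeMonoid X → K := Finsupp.lcoeFun ∘ₗ (coeffLinearEquiv K).toLinearMap
  have hinj : Function.Injective coeffFun := fun a b h ↦ coeff_injective (DFunLike.coe_injective h)
  have hrange : (Set.range fun w₁ w₂ ↦ p.coeff (w₁ * w₂)) =
      coeffFun '' Set.range fun w ↦ leftQuot w p := by
    rw [← Set.range_comp]; rfl
  rw [hankelRank, hrange, ← map_span]
  exact (LinearEquiv.finrank_eq (equivMapOfInjective _ hinj _)).symm

end Hankel

/-- For nonzero polynomials, `rank(pq) = rank(p) + rank(q) − 1`. -/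
theorem hankelRank_mul {K X : Type*} [Field K]
    (p q : MonoidAlgebra K (FreeMonoid X)) (hp : p ≠ 0) (hq : q ≠ 0) :
    hankelRank (p * q) = hankelRank p + hankelRank q - 1 := by
  simp only [Hankel.hankelRank_eq_finrank_quotSpan, Hankel.finrank_quotSpan_mul hp hq,
    Hankel.finrank_quotSpan_eq_succ hq]
  omega
end

section
/- For any nonzero polynomial p in the free associative algebra K⟨X⟩ that is a non-unit, every factorization of p into atoms has the same number of factors; defining ℓ(p) to be this common number, one has ℓ(pq) = ℓ(p) + ℓ(q) for nonzero non-units p, q. -/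
/-!
Grade `K⟨X⟩ = K[FreeMonoid X]` by word length. If `a * f = b * g ≠ 0` and `deg a ≤ deg b`, the
leading forms satisfy the same relation, and comparing the coefficients of words with a fixed prefix
of length `deg a` shows that the leading form of `a` left-divides that of `b`; hence
`deg (b - a * c) < deg b` for some `c` (Cohn's 2-term weak algorithm). A Euclidean descent on
`deg a + deg b` then shows that `a` and `b` have a common left divisor in `a R + b R` and a least
common right multiple `a * u = b * v` through which every other one factors. When `a` and `b` are
atoms with `a ∤ b`, the cofactors `u` and `v` are atoms as well, so `a * f = b * g` forces
`f = u * w` and `g = v * w`; comparing the factorizations `a, u, M` and `b, v, M` of the two sides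
proves, by induction on the degree, that all atomic factorizations have the same length.
-/

theorem List.eq_nil_of_isUnit_prod {M : Type*} [Monoid M] [IsDedekindFiniteMonoid M]
    {L : List M} (hL : ∀ x ∈ L, Irreducible x) (h : IsUnit L.prod) : L = [] := by
  cases L with
  | nil => rfl
  | cons a L =>
    rw [List.prod_cons] at h
    exact ((hL a List.mem_cons_self).not_isUnit (isUnit_of_mul_isUnit_left h)).elim

theorem List.prod_ne_zero_of_irreducible {M₀ : Type*} [MonoidWithZero M₀] [NoZeroDivisors M₀]
    [Nontrivial M₀] {L : List M₀} (hL : ∀ x ∈ L, Irreducible x) : L.prod ≠ 0 :=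
  List.prod_ne_zero fun h => not_irreducible_zero (hL 0 h)

section Ring

variable {R : Type*} [Ring R]

/-- Cohn's 2-term weak algorithm, for relations `a * f = b * g`; the alternative `b = a * c`
stands in for the convention `deg 0 = -∞`. -/
structure HasTwoTermWeakAlgorithm (deg : R → ℕ) : Prop where
  deg_mul {a b : R} : a ≠ 0 → b ≠ 0 → deg (a * b) = deg a + deg b
  isUnit_of_deg_eq_zero {a : R} : a ≠ 0 → deg a = 0 → IsUnit a
  exists_deg_sub_mul_lt {a b f g : R} : a * f = b * g → a * f ≠ 0 → deg a ≤ deg b →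
    ∃ c, b = a * c ∨ deg (b - a * c) < deg b

def HasBezoutCommonDivisor (a b : R) : Prop :=
  ∃ d s t, d ∣ a ∧ d ∣ b ∧ d = a * s + b * t

def HasUniversalCommonMultiple (a b : R) : Prop :=
  ∃ u v, a * u = b * v ∧ ∀ x y, a * x = b * y → ∃ w, x = u * w ∧ y = v * w

variable {a b : R}

theorem HasBezoutCommonDivisor.symm (h : HasBezoutCommonDivisor a b) :
    HasBezoutCommonDivisor b a := by
  obtain ⟨d, s, t, hda, hdb, hd⟩ := h
  exact ⟨d, t, s, hdb, hda, hd.trans (add_comm _ _)⟩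

theorem hasBezoutCommonDivisor_mul_right (a c : R) : HasBezoutCommonDivisor a (a * c) :=
  ⟨a, 1, 0, dvd_rfl, dvd_mul_right a c, by simp⟩

theorem HasBezoutCommonDivisor.add_mul (h : HasBezoutCommonDivisor a b) (c : R) :
    HasBezoutCommonDivisor a (b + a * c) := by
  obtain ⟨d, s, t, hda, hdb, hd⟩ := h
  exact ⟨d, s - c * t, t, hda, dvd_add hdb (hda.mul_right c), by rw [hd]; noncomm_ring⟩

theorem HasUniversalCommonMultiple.symm (h : HasUniversalCommonMultiple a b) :
    HasUniversalCommonMultiple b a := by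
  obtain ⟨u, v, huv, huniv⟩ := h
  exact ⟨v, u, huv.symm, fun x y hxy => (huniv y x hxy.symm).imp fun _ => And.symm⟩

theorem hasUniversalCommonMultiple_mul_right [IsDomain R] (c : R) (ha : a ≠ 0) :
    HasUniversalCommonMultiple a (a * c) :=
  ⟨c, 1, (mul_one _).symm, fun x y hxy =>
    ⟨y, mul_left_cancel₀ ha (by rw [hxy, mul_assoc]), (one_mul y).symm⟩⟩

theorem HasUniversalCommonMultiple.add_mul (h : HasUniversalCommonMultiple a b) (c : R) :
    HasUniversalCommonMultiple a (b + a * c) := by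
  obtain ⟨u, v, huv, huniv⟩ := h
  refine ⟨u + c * v, v, by rw [mul_add, huv]; noncomm_ring, fun x y hxy => ?_⟩
  obtain ⟨w, hx, hy⟩ := huniv (x - c * y) y (by rw [mul_sub, hxy]; noncomm_ring)
  exact ⟨w, by rw [_root_.add_mul, mul_assoc, ← hy, ← hx, sub_add_cancel], hy⟩

namespace HasTwoTermWeakAlgorithm

variable {deg : R → ℕ}

theorem deg_pos (hdeg : HasTwoTermWeakAlgorithm deg) (ha : a ≠ 0) (hu : ¬IsUnit a) :
    0 < deg a :=
  Nat.pos_of_ne_zero fun h => hu (hdeg.isUnit_of_deg_eq_zero ha h)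

theorem comp_ringEquiv {S : Type*} [Ring S] {deg : S → ℕ} (hdeg : HasTwoTermWeakAlgorithm deg)
    (e : R ≃+* S) : HasTwoTermWeakAlgorithm (deg ∘ e) where
  deg_mul ha hb := by
    simpa using
      hdeg.deg_mul (EmbeddingLike.map_ne_zero_iff.2 ha) (EmbeddingLike.map_ne_zero_iff.2 hb)
  isUnit_of_deg_eq_zero ha h :=
    (MulEquiv.isUnit_map e).1 (hdeg.isUnit_of_deg_eq_zero (EmbeddingLike.map_ne_zero_iff.2 ha) h)
  exists_deg_sub_mul_lt {a b f g} h h0 hab := by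
    obtain ⟨c, hc⟩ := hdeg.exists_deg_sub_mul_lt (a := e a) (b := e b) (f := e f) (g := e g)
      (by rw [← map_mul, ← map_mul, h])
      (by rw [← map_mul]; exact EmbeddingLike.map_ne_zero_iff.2 h0) hab
    refine ⟨e.symm c, ?_⟩
    simpa [← e.apply_eq_iff_eq] using hc

theorem exists_factors (hdeg : HasTwoTermWeakAlgorithm deg) (ha : a ≠ 0) (hu : ¬IsUnit a) :
    ∃ L : List R, (∀ x ∈ L, Irreducible x) ∧ L.prod = a := by
  induction hn : deg a using Nat.strong_induction_on generalizing a with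
  | _ n ih =>
  by_cases hirr : Irreducible a
  · exact ⟨[a], by simpa using hirr, by simp⟩
  obtain ⟨x, y, rfl, hx, hy⟩ : ∃ x y, a = x * y ∧ ¬IsUnit x ∧ ¬IsUnit y := by
    simpa [irreducible_iff, hu] using hirr
  have hx0 := left_ne_zero_of_mul ha
  have hy0 := right_ne_zero_of_mul ha
  have hxy := hdeg.deg_mul hx0 hy0
  have hx_pos := hdeg.deg_pos hx0 hx
  have hy_pos := hdeg.deg_pos hy0 hy
  obtain ⟨Lx, hLx, rfl⟩ := ih _ (by omega) hx0 hx rfl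
  obtain ⟨Ly, hLy, rfl⟩ := ih _ (by omega) hy0 hy rfl
  exact ⟨Lx ++ Ly, List.forall_mem_append.2 ⟨hLx, hLy⟩, List.prod_append⟩

variable [IsDomain R]

theorem pair_induction (hdeg : HasTwoTermWeakAlgorithm deg) {P : R → R → Prop}
    (hsymm : ∀ {a b}, P a b → P b a) (hmul : ∀ {a} c, a ≠ 0 → P a (a * c))
    (hadd : ∀ {a b} c, P a b → P a (b + a * c))
    {f g : R} (h : a * f = b * g) (h0 : a * f ≠ 0) : P a b := by
  induction hn : deg a + deg b using Nat.strong_induction_on generalizing a b f g with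
  | _ n ih =>
  wlog hab : deg a ≤ deg b generalizing a b f g
  · exact hsymm (this h.symm (h ▸ h0) (by omega) (by omega))
  have ha := left_ne_zero_of_mul h0
  obtain ⟨c, hc⟩ := hdeg.exists_deg_sub_mul_lt h h0 hab
  by_cases hbc : b - a * c = 0
  · rw [← sub_add_cancel b (a * c), hbc, zero_add]
    exact hmul c ha
  have hlt : deg (b - a * c) < deg b := hc.resolve_left fun hb => hbc (by rw [hb, sub_self])
  have hrel : a * (f - c * g) = (b - a * c) * g := by rw [mul_sub, h]; noncomm_ring
  have hne : a * (f - c * g) ≠ 0 := hrel ▸ mul_ne_zero hbc (right_ne_zero_of_mul (h ▸ h0))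
  simpa using hadd c (ih _ (by omega) hrel hne rfl)

theorem hasBezoutCommonDivisor (hdeg : HasTwoTermWeakAlgorithm deg) {f g : R}
    (h : a * f = b * g) (h0 : a * f ≠ 0) : HasBezoutCommonDivisor a b :=
  hdeg.pair_induction HasBezoutCommonDivisor.symm
    (fun c _ => hasBezoutCommonDivisor_mul_right _ c) (fun c hab => hab.add_mul c) h h0

theorem hasUniversalCommonMultiple (hdeg : HasTwoTermWeakAlgorithm deg) {f g : R}
    (h : a * f = b * g) (h0 : a * f ≠ 0) : HasUniversalCommonMultiple a b :=
  hdeg.pair_induction HasUniversalCommonMultiple.symm hasUniversalCommonMultiple_mul_right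
    (fun c hab => hab.add_mul c) h h0

theorem irreducible_cofactor (hdeg : HasTwoTermWeakAlgorithm deg) {u v : R}
    (ha : Irreducible a) (hb : Irreducible b) (hba : ¬b ∣ a) (hu : u ≠ 0) (huv : a * u = b * v)
    (huniv : ∀ x y, a * x = b * y → ∃ w, x = u * w ∧ y = v * w) : Irreducible u := by
  refine ⟨fun hu' => hba ?_, fun u₁ u₂ hu12 => ?_⟩
  · obtain ⟨e, rfl⟩ := hu'
    exact ⟨v * ↑e⁻¹, by rw [← mul_assoc, ← huv, Units.mul_inv_cancel_right]⟩
  have hu₁ : u₁ ≠ 0 := left_ne_zero_of_mul (hu12 ▸ hu)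
  obtain ⟨d, s, t, ⟨α, hα⟩, ⟨β, hβ⟩, hd⟩ :=
    hdeg.hasBezoutCommonDivisor (a := a * u₁) (b := b) (f := u₂) (g := v)
      (by rw [mul_assoc, ← hu12, huv]) (by rw [mul_assoc, ← hu12]; exact mul_ne_zero ha.ne_zero hu)
  -- The atom `b = d * β` leaves two cases: if `d` is a unit then `1 ∈ a u₁ R + b R`, which makes
  -- `u₁` a unit; if `β` is a unit then `b ∣ a * u₁`, which makes `u₂` a unit.
  rcases hb.isUnit_or_isUnit hβ with ⟨e, rfl⟩ | ⟨e, rfl⟩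
  · have hrel : a * (1 - u₁ * (s * ↑e⁻¹ * a)) = b * (t * ↑e⁻¹ * a) := by
      have : (a * u₁ * s + b * t) * ↑e⁻¹ * a = a := by rw [← hd, Units.mul_inv, one_mul]
      rw [mul_sub, mul_one, sub_eq_iff_eq_add]
      nth_rewrite 1 [← this]
      noncomm_ring
    obtain ⟨w, hw, -⟩ := huniv _ _ hrel
    left
    refine IsUnit.of_mul_eq_one (s * ↑e⁻¹ * a + u₂ * w) ?_
    rw [mul_add, ← mul_assoc u₁ u₂, ← hu12, ← hw, add_sub_cancel]
  · have hrel : a * u₁ = b * (↑e⁻¹ * α) := by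
      rw [hα, hβ, mul_assoc, Units.mul_inv_cancel_left]
    obtain ⟨w, hw, -⟩ := huniv _ _ hrel
    right
    refine IsUnit.of_mul_eq_one w (mul_left_cancel₀ hu₁ ?_)
    rw [mul_one, ← mul_assoc, ← hu12, ← hw]

theorem exists_common_tail (hdeg : HasTwoTermWeakAlgorithm deg) {f g : R} (ha : Irreducible a)
    (hb : Irreducible b) (hab : ¬a ∣ b) (h : a * f = b * g) (h0 : a * f ≠ 0) :
    ∃ (u v : R) (M : List R), Irreducible u ∧ Irreducible v ∧ (∀ x ∈ M, Irreducible x) ∧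
      f = u * M.prod ∧ g = v * M.prod := by
  obtain ⟨u, v, huv, huniv⟩ := hdeg.hasUniversalCommonMultiple h h0
  obtain ⟨w, rfl, rfl⟩ := huniv f g h
  have huw : u * w ≠ 0 := right_ne_zero_of_mul h0
  have hvw : v * w ≠ 0 := right_ne_zero_of_mul (h ▸ h0)
  have hu : Irreducible u := hdeg.irreducible_cofactor ha hb (mt (hb.dvd_symm ha) hab)
    (left_ne_zero_of_mul huw) huv huniv
  have hv : Irreducible v := hdeg.irreducible_cofactor hb ha hab (left_ne_zero_of_mul hvw)
    huv.symm fun x y hxy => (huniv y x hxy.symm).imp fun _ => And.symm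
  by_cases hw : IsUnit w
  · exact ⟨u * w, v * w, [], (irreducible_mul_isUnit hw).2 hu, (irreducible_mul_isUnit hw).2 hv,
      by simp, by simp, by simp⟩
  · obtain ⟨M, hM, rfl⟩ := hdeg.exists_factors (right_ne_zero_of_mul huw) hw
    exact ⟨u, v, M, hu, hv, hM, rfl, rfl⟩

theorem length_eq_of_prod_eq_unit_mul (hdeg : HasTwoTermWeakAlgorithm deg) {L L' : List R}
    {e : R} (hL : ∀ x ∈ L, Irreducible x) (hL' : ∀ x ∈ L', Irreducible x) (he : IsUnit e)
    (h : L.prod = e * L'.prod) : L.length = L'.length := by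
  induction hn : deg L.prod using Nat.strong_induction_on generalizing L L' e with
  | _ n ih =>
  rcases L with _ | ⟨a, La⟩
  · have hunit : IsUnit (e * L'.prod) := by rw [← h, List.prod_nil]; exact isUnit_one
    rw [List.eq_nil_of_isUnit_prod hL' (isUnit_of_mul_isUnit_right hunit)]
  rcases L' with _ | ⟨b, Lb⟩
  · exact absurd (List.eq_nil_of_isUnit_prod hL (by simpa [h] using he)) (List.cons_ne_nil _ _)
  simp only [List.forall_mem_cons, List.prod_cons, List.length_cons] at hL hL' h hn ⊢
  obtain ⟨ha, hLa⟩ := hL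
  obtain ⟨hb, hLb⟩ := hL'
  have hb' : Irreducible (e * b) := (irreducible_isUnit_mul he).2 hb
  rw [← mul_assoc] at h
  have hfa := List.prod_ne_zero_of_irreducible hLa
  have hfb := List.prod_ne_zero_of_irreducible hLb
  have hna := hdeg.deg_mul ha.ne_zero hfa
  have hnb := h ▸ hdeg.deg_mul hb'.ne_zero hfb
  have ha_pos := hdeg.deg_pos ha.ne_zero ha.not_isUnit
  have hb_pos := hdeg.deg_pos hb'.ne_zero hb'.not_isUnit
  by_cases hab : a ∣ e * b
  · obtain ⟨r, hr⟩ := hab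
    have hr' : IsUnit r := (hb'.isUnit_or_isUnit hr).resolve_left ha.not_isUnit
    have hLr : La.prod = r * Lb.prod := mul_left_cancel₀ ha.ne_zero (by rw [h, hr, mul_assoc])
    rw [ih _ (by omega) hLa hLb hr' hLr rfl]
  · obtain ⟨u, v, M, hu, hv, hM, hfu, hfv⟩ :=
      hdeg.exists_common_tail ha hb' hab h (mul_ne_zero ha.ne_zero hfa)
    have h1 := ih _ (by omega) hLa (L' := u :: M) (List.forall_mem_cons.2 ⟨hu, hM⟩) isUnit_one
      (by simpa using hfu) rfl
    have h2 := ih _ (by omega) hLb (L' := v :: M) (List.forall_mem_cons.2 ⟨hv, hM⟩) isUnit_one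
      (by simpa using hfv) rfl
    simp [h1, h2]

theorem length_eq_of_prod_eq (hdeg : HasTwoTermWeakAlgorithm deg) {L L' : List R}
    (hL : ∀ x ∈ L, Irreducible x) (hL' : ∀ x ∈ L', Irreducible x) (h : L.prod = L'.prod) :
    L.length = L'.length :=
  hdeg.length_eq_of_prod_eq_unit_mul hL hL' isUnit_one (h.trans (one_mul _).symm)

end HasTwoTermWeakAlgorithm

end Ring

namespace FreeMonoid

variable {α : Type*}

theorem exists_eq_mul_of_mul_eq_mul {x y w v : FreeMonoid α} (h : x * y = w * v)
    (hlen : w.length ≤ x.length) : ∃ x', x = w * x' := by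
  have hl : x.toList ++ y.toList = w.toList ++ v.toList := by
    simpa only [toList_mul] using congrArg toList h
  have htake : x.toList.take w.length = w.toList := by
    rw [← List.take_append_of_le_length (l₂ := y.toList) hlen, hl, length, List.take_left]
  refine ⟨ofList (x.toList.drop w.length), toList.injective ?_⟩
  rw [toList_mul, toList_ofList, ← htake, List.take_append_drop]

theorem eq_of_mul_eq_mul_of_length_eq {x y w v : FreeMonoid α} (h : x * y = w * v)
    (hlen : x.length = w.length) : x = w := by
  obtain ⟨x', rfl⟩ := exists_eq_mul_of_mul_eq_mul h hlen.ge
  have : x'.length = 0 := by rw [length_mul] at hlen; omega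
  rw [length_eq_zero.1 this, mul_one]

theorem exists_eq_mul_of_le_length {z : FreeMonoid α} {m : ℕ} (hm : m ≤ z.length) :
    ∃ w v, z = w * v ∧ w.length = m :=
  ⟨ofList (z.toList.take m), ofList (z.toList.drop m),
    toList.injective (by simp), by simpa [length] using hm⟩

end FreeMonoid

namespace MonoidAlgebra

open FreeMonoid Finsupp

variable {K X : Type*}

section Semiring

variable [Semiring K] {p q : K[FreeMonoid X]} {m n : ℕ} {w v : FreeMonoid X}

noncomputable def wordDegree (p : K[FreeMonoid X]) : ℕ := p.coeff.support.sup length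

def IsHomogeneous (n : ℕ) (p : K[FreeMonoid X]) : Prop := ∀ w ∈ p.coeff.support, w.length = n

noncomputable def leadingForm (p : K[FreeMonoid X]) : K[FreeMonoid X] :=
  ofCoeff (p.coeff.filter fun w => w.length = p.wordDegree)

noncomputable def leftQuot (w : FreeMonoid X) (p : K[FreeMonoid X]) : K[FreeMonoid X] :=
  ofCoeff (p.coeff.comapDomain (w * ·) (mul_right_injective w).injOn)

theorem length_le_wordDegree (hw : w ∈ p.coeff.support) : w.length ≤ p.wordDegree :=
  Finset.le_sup hw

theorem exists_length_eq_wordDegree (hp : p ≠ 0) :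
    ∃ w ∈ p.coeff.support, w.length = p.wordDegree := by
  obtain ⟨w, hw, h⟩ :=
    Finset.exists_mem_eq_sup _ (support_nonempty_iff.2 (coeff_eq_zero.not.2 hp)) length
  exact ⟨w, hw, h.symm⟩

theorem coeff_leadingForm (p : K[FreeMonoid X]) (w : FreeMonoid X) :
    p.leadingForm.coeff w = if w.length = p.wordDegree then p.coeff w else 0 :=
  filter_apply _ _ _

theorem isHomogeneous_leadingForm (p : K[FreeMonoid X]) :
    IsHomogeneous p.wordDegree p.leadingForm := fun _ hw => by
  rw [leadingForm, coeff_ofCoeff, support_filter, Finset.mem_filter] at hw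
  exact hw.2

theorem leadingForm_ne_zero (hp : p ≠ 0) : p.leadingForm ≠ 0 := by
  obtain ⟨w, hw, hlen⟩ := exists_length_eq_wordDegree hp
  intro h
  have := coeff_leadingForm p w
  rw [h, if_pos hlen] at this
  exact mem_support_iff.1 hw this.symm

theorem IsHomogeneous.wordDegree_eq (h : IsHomogeneous n p) (hp : p ≠ 0) : p.wordDegree = n := by
  obtain ⟨w, hw, hlen⟩ := exists_length_eq_wordDegree hp
  exact hlen.symm.trans (h w hw)

theorem IsHomogeneous.leadingForm_eq (h : IsHomogeneous n p) : p.leadingForm = p := by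
  ext w
  rw [coeff_leadingForm, ite_eq_left_iff]
  intro hlen
  by_contra hw
  have hw := mem_support_iff.2 (Ne.symm hw)
  exact hlen ((h w hw).trans (h.wordDegree_eq (by rintro rfl; simp at hw)).symm)

theorem leadingForm_leadingForm (p : K[FreeMonoid X]) :
    p.leadingForm.leadingForm = p.leadingForm :=
  (isHomogeneous_leadingForm p).leadingForm_eq

theorem wordDegree_leadingForm (hp : p ≠ 0) : p.leadingForm.wordDegree = p.wordDegree :=
  (isHomogeneous_leadingForm p).wordDegree_eq (leadingForm_ne_zero hp)

theorem IsHomogeneous.mul (hp : IsHomogeneous m p) (hq : IsHomogeneous n q) :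
    IsHomogeneous (m + n) (p * q) := by
  classical
  intro z hz
  obtain ⟨x, hx, y, hy, rfl⟩ := Finset.mem_mul.1 (support_coeff_mul_subset p q hz)
  rw [length_mul, hp x hx, hq y hy]

theorem wordDegree_mul_le (p q : K[FreeMonoid X]) :
    (p * q).wordDegree ≤ p.wordDegree + q.wordDegree := by
  classical
  refine Finset.sup_le fun z hz => ?_
  obtain ⟨x, hx, y, hy, rfl⟩ := Finset.mem_mul.1 (support_coeff_mul_subset p q hz)
  rw [length_mul]
  exact add_le_add (length_le_wordDegree hx) (length_le_wordDegree hy)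

theorem coeff_mul_mul_of_length_le (hp : ∀ x ∈ p.coeff.support, x.length ≤ w.length)
    (hq : ∀ y ∈ q.coeff.support, y.length ≤ v.length) :
    (p * q).coeff (w * v) = p.coeff w * q.coeff v := by
  classical
  rw [coeff_mul, Finsupp.sum_eq_single w]
  · simp +contextual [Finsupp.sum_ite_eq']
  · intro x hx hxw
    refine Finset.sum_eq_zero fun y hy => if_neg fun h => hxw ?_
    have hlen := congrArg length h
    rw [length_mul, length_mul] at hlen
    exact eq_of_mul_eq_mul_of_length_eq h (by linarith [hp x (mem_support_iff.2 hx), hq y hy])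
  · simp

theorem coeff_leftQuot (w v : FreeMonoid X) (p : K[FreeMonoid X]) :
    (leftQuot w p).coeff v = p.coeff (w * v) :=
  comapDomain_apply _ _ _ _

theorem coeff_mul_mul_eq_coeff_leftQuot_mul (hp : ∀ x ∈ p.coeff.support, w.length ≤ x.length)
    (q : K[FreeMonoid X]) (v : FreeMonoid X) :
    (p * q).coeff (w * v) = (leftQuot w p * q).coeff v := by
  classical
  induction q using induction_linear generalizing v with
  | zero => simp
  | add q₁ q₂ h₁ h₂ => simp only [mul_add, coeff_add, Finsupp.add_apply, h₁, h₂]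
  | single y r =>
    by_cases hv : ∃ v', v = v' * y
    · obtain ⟨v', rfl⟩ := hv
      rw [← mul_assoc, coeff_mul_single_mul, coeff_mul_single_mul, coeff_leftQuot]
    · push Not at hv
      rw [coeff_mul_single_of_forall_mul_ne _ _ fun d hd => hv d hd.symm]
      by_contra hne
      obtain ⟨x, hx, y', hy', hxy⟩ :=
        Finset.mem_mul.1 (support_coeff_mul_subset _ _ (mem_support_iff.2 hne))
      rw [Finset.mem_singleton.1 (Finsupp.support_single_subset hy')] at hxy
      obtain ⟨x', rfl⟩ := exists_eq_mul_of_mul_eq_mul hxy (hp x hx)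
      exact hv x' (mul_left_cancel (hxy.symm.trans (mul_assoc _ _ _)))

theorem IsHomogeneous.leftQuot_eq (h : IsHomogeneous w.length p) :
    leftQuot w p = single 1 (p.coeff w) := by
  classical
  ext v
  rw [coeff_leftQuot, coeff_single, single_apply]
  split_ifs with hv
  · rw [← hv, mul_one]
  · by_contra hne
    have := h _ (mem_support_iff.2 hne)
    rw [length_mul, add_eq_left, length_eq_zero] at this
    exact hv this.symm

end Semiring

section NoZeroDivisors

variable [Semiring K] [NoZeroDivisors K] {p q : K[FreeMonoid X]}

theorem wordDegree_mul (hp : p ≠ 0) (hq : q ≠ 0) :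
    (p * q).wordDegree = p.wordDegree + q.wordDegree := by
  refine (wordDegree_mul_le p q).antisymm ?_
  obtain ⟨w, hw, hwl⟩ := exists_length_eq_wordDegree hp
  obtain ⟨v, hv, hvl⟩ := exists_length_eq_wordDegree hq
  have hwv : (p * q).coeff (w * v) ≠ 0 := by
    rw [coeff_mul_mul_of_length_le (fun x hx => hwl ▸ length_le_wordDegree hx)
      (fun y hy => hvl ▸ length_le_wordDegree hy)]
    exact mul_ne_zero (mem_support_iff.1 hw) (mem_support_iff.1 hv)
  simpa [hwl, hvl] using length_le_wordDegree (mem_support_iff.2 hwv)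

theorem leadingForm_mul (hp : p ≠ 0) (hq : q ≠ 0) :
    (p * q).leadingForm = p.leadingForm * q.leadingForm := by
  ext z
  rw [coeff_leadingForm, wordDegree_mul hp hq]
  split_ifs with hz
  · obtain ⟨w, v, rfl, hw⟩ := exists_eq_mul_of_le_length (hz ▸ Nat.le_add_right _ _)
    have hv : v.length = q.wordDegree := by rw [length_mul] at hz; omega
    rw [coeff_mul_mul_of_length_le (fun x hx => hw ▸ length_le_wordDegree hx)
        (fun y hy => hv ▸ length_le_wordDegree hy),
      coeff_mul_mul_of_length_le (fun x hx => ((isHomogeneous_leadingForm p x hx).trans hw.symm).le)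
        (fun y hy => ((isHomogeneous_leadingForm q y hy).trans hv.symm).le),
      coeff_leadingForm, coeff_leadingForm, if_pos hw, if_pos hv]
  · by_contra hne
    exact hz ((isHomogeneous_leadingForm p).mul (isHomogeneous_leadingForm q) z
      (mem_support_iff.2 (Ne.symm hne)))

end NoZeroDivisors

section Ring

variable [Ring K] {p q : K[FreeMonoid X]}

theorem eq_or_wordDegree_sub_lt (hd : p.wordDegree = q.wordDegree)
    (hl : p.leadingForm = q.leadingForm) : p = q ∨ (p - q).wordDegree < p.wordDegree := by
  classical
  rcases eq_or_ne (p - q) 0 with h | h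
  · exact .inl (sub_eq_zero.1 h)
  obtain ⟨z, hz, hlen⟩ := exists_length_eq_wordDegree h
  refine .inr (hlen ▸ lt_of_le_of_ne ?_ fun heq => mem_support_iff.1 hz ?_)
  · rcases Finset.mem_union.1 (support_sub hz) with hz | hz
    exacts [length_le_wordDegree hz, hd ▸ length_le_wordDegree hz]
  · have := congrArg (·.coeff z) hl
    simp only [coeff_leadingForm, if_pos heq, if_pos (heq.trans hd)] at this
    rw [coeff_sub, Finsupp.sub_apply, this, sub_self]

end Ring

section Field

variable [Field K]

theorem IsHomogeneous.dvd_of_mul_eq_mul {m : ℕ} {P B F G : K[FreeMonoid X]}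
    (hP : IsHomogeneous m P) (hP0 : P ≠ 0) (hB : ∀ x ∈ B.coeff.support, m ≤ x.length) (hG : G ≠ 0)
    (h : P * F = B * G) : P ∣ B := by
  obtain ⟨w, hw⟩ := support_nonempty_iff.2 (coeff_eq_zero.not.2 hP0)
  have hwm : w.length = m := hP w hw
  subst hwm
  -- Comparing coefficients at the words `w * v` gives `P_w • F = leftQuot w B * G`, so
  -- `F = C * G`, and cancelling `G` in `P * C * G = B * G` leaves `B = P * C`.
  have hPF : P.coeff w • F = leftQuot w B * G := by
    ext v
    rw [← coeff_mul_mul_eq_coeff_leftQuot_mul hB, ← h,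
      coeff_mul_mul_eq_coeff_leftQuot_mul (fun x hx => (hP x hx).ge), hP.leftQuot_eq,
      coeff_single_one_mul, coeff_smul_apply, smul_eq_mul]
  refine ⟨(P.coeff w)⁻¹ • leftQuot w B, mul_right_cancel₀ hG ?_⟩
  rw [← h, mul_assoc, smul_mul_assoc, ← hPF, smul_smul, inv_mul_cancel₀ (mem_support_iff.1 hw),
    one_smul]

theorem isUnit_of_wordDegree_eq_zero {p : K[FreeMonoid X]} (hp : p ≠ 0)
    (h : p.wordDegree = 0) : IsUnit p := by
  have hsupp : p.coeff.support ⊆ {1} := fun w hw =>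
    Finset.mem_singleton.2 (length_eq_zero.1 (Nat.le_zero.1 (h ▸ length_le_wordDegree hw)))
  have hp' : p = singleOneRingHom (p.coeff 1) :=
    coeff_injective (support_subset_singleton.1 hsupp)
  rw [hp'] at hp ⊢
  exact (Ne.isUnit fun h0 => hp (by rw [h0, map_zero])).map _

theorem hasTwoTermWeakAlgorithm_wordDegree :
    HasTwoTermWeakAlgorithm (wordDegree : K[FreeMonoid X] → ℕ) where
  deg_mul := wordDegree_mul
  isUnit_of_deg_eq_zero := isUnit_of_wordDegree_eq_zero
  exists_deg_sub_mul_lt {a b f g} h h0 hab := by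
    have ha := left_ne_zero_of_mul h0
    have hf := right_ne_zero_of_mul h0
    have hb := left_ne_zero_of_mul (h ▸ h0)
    have hg := right_ne_zero_of_mul (h ▸ h0)
    obtain ⟨C, hC⟩ := (isHomogeneous_leadingForm a).dvd_of_mul_eq_mul (leadingForm_ne_zero ha)
      (fun x hx => hab.trans (isHomogeneous_leadingForm b x hx).ge) (leadingForm_ne_zero hg)
      (by rw [← leadingForm_mul ha hf, ← leadingForm_mul hb hg, h])
    have hC0 : C ≠ 0 := by rintro rfl; exact leadingForm_ne_zero hb (by rw [hC, mul_zero])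
    have hlead : b.leadingForm = a.leadingForm * C.leadingForm := by
      rw [← leadingForm_leadingForm, hC, leadingForm_mul (leadingForm_ne_zero ha) hC0,
        leadingForm_leadingForm]
    have hC' := leadingForm_ne_zero hC0
    refine ⟨C.leadingForm, eq_or_wordDegree_sub_lt ?_ ?_⟩
    · rw [wordDegree_mul ha hC', ← wordDegree_leadingForm hb, hlead,
        wordDegree_mul (leadingForm_ne_zero ha) hC', wordDegree_leadingForm ha]
    · rw [leadingForm_mul ha hC', leadingForm_leadingForm, hlead]

end Field

end MonoidAlgebra

theorem freeAlgebra_length_welldefined_and_additive_general {K X : Type*} [Field K]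
    (p q : FreeAlgebra K X) :
    (∀ L L' : List (FreeAlgebra K X),
      (∀ a ∈ L, Irreducible a) → (∀ a ∈ L', Irreducible a) →
      L.prod = p → L'.prod = p → L.length = L'.length) ∧
    (∀ L M N : List (FreeAlgebra K X),
      (∀ a ∈ L, Irreducible a) → (∀ a ∈ M, Irreducible a) →
      (∀ a ∈ N, Irreducible a) →
      L.prod = p → M.prod = q → N.prod = p * q →
      N.length = L.length + M.length) := by
  have hdeg := MonoidAlgebra.hasTwoTermWeakAlgorithm_wordDegree.comp_ringEquiv
    (FreeAlgebra.equivMonoidAlgebraFreeMonoid : FreeAlgebra K X ≃ₐ[K] _).toRingEquiv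
  refine ⟨fun L L' hL hL' hLp hL'p => hdeg.length_eq_of_prod_eq hL hL' (hLp.trans hL'p.symm),
    fun L M N hL hM hN hLp hMp hNp => ?_⟩
  simpa using hdeg.length_eq_of_prod_eq hN (List.forall_mem_append.2 ⟨hL, hM⟩)
    (by rw [hNp, List.prod_append, hLp, hMp])

/-- In `K⟨X⟩` every factorization of a nonzero non-unit into atoms has the
same number of factors, and this length is additive on products. -/
theorem freeAlgebra_length_welldefined_and_additive {K X : Type*} [Field K]
    (p q : FreeAlgebra K X)
    (hp : p ≠ 0) (hpu : ¬ IsUnit p) (hq : q ≠ 0) (hqu : ¬ IsUnit q) :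
    (∀ L L' : List (FreeAlgebra K X),
      (∀ a ∈ L, Irreducible a) → (∀ a ∈ L', Irreducible a) →
      L.prod = p → L'.prod = p → L.length = L'.length) ∧
    (∀ L M N : List (FreeAlgebra K X),
      (∀ a ∈ L, Irreducible a) → (∀ a ∈ M, Irreducible a) →
      (∀ a ∈ N, Irreducible a) →
      L.prod = p → M.prod = q → N.prod = p * q →
      N.length = L.length + M.length) :=
  freeAlgebra_length_welldefined_and_additive_general p q
end
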